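/- Fix n ∈ ℕ, a finite type V, and s : Fin n → V, and let μ be the uniform probability measure on Equiv.Perm (Fin n). Let v : Fin d → V be an injective enumeration of all values occurring in the range of s such that the counts c_j = |{x : Fin n | s x = v j}| are nonincreasing in j. Let l ≤ n, let p : Fin l → Fin n be injective, let k : Fin l → ℕ be nonincreasing with 1 ≤ k_i ≤ d, and for each i < l let u_{i,0}, …, u_{i,k_i−1} be distinct values of V. Set M_i = Σ_{j<k_i} c_j and assume i + M_i ≤ n for all i < l. Then μ( { π | ∀ i < l, ∀ j < k_i, s (π (p i)) ≠ u_{i,j} } ) ≥ ∏_{i<l} (n − i − M_i)/(n − i). (This is the minimality half of Lemma 3 of the paper: over all sets of k = Σ_i k_i atoms in which k_i atoms involve the i-th person, the probability of the conjunction of negated atoms is minimized by choosing, for each person, the k_i most frequent sensitive values.) -/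

import Mathlib

open MeasureTheory ProbabilityTheory

noncomputable instance (n : ℕ) : MeasurableSpace (Equiv.Perm (Fin n)) := ⊤


lemma my_snoc_injective {n l : ℕ} {g : Fin l → Fin n} (hg : Function.Injective g) {x : Fin n}
    (hx : ∀ i, g i ≠ x) : Function.Injective (Fin.snoc g x : Fin (l + 1) → Fin n) := by
  intro a b hab
  induction a using Fin.lastCases with
  | last =>
    induction b using Fin.lastCases with
    | last => rfl
    | cast j => rw [Fin.snoc_last, Fin.snoc_castSucc] at hab; exact absurd hab.symm (hx j)
  | cast i =>
    induction b using Fin.lastCases with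
    | last => rw [Fin.snoc_last, Fin.snoc_castSucc] at hab; exact absurd hab (hx i)
    | cast j => rw [Fin.snoc_castSucc, Fin.snoc_castSucc] at hab; exact congrArg _ (hg hab)

lemma my_strictMono_fin_le {m d : ℕ} {f : Fin m → Fin d} (hf : StrictMono f) (i : Fin m) :
    (i : ℕ) ≤ (f i : ℕ) := by
  set F : ℕ → ℕ := fun a => if h : a < m then (f ⟨a, h⟩ : ℕ) else a + d with hF
  have hFm : StrictMono F := by
    intro a b hab
    simp only [hF]
    split_ifs with ha hb hb
    · exact hf (show (⟨a, ha⟩ : Fin m) < ⟨b, hb⟩ from hab)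
    · exact lt_of_lt_of_le (f ⟨a, ha⟩).isLt (Nat.le_add_left _ _)
    · omega
    · omega
  have h := hFm.le_apply (x := (i : ℕ))
  simp only [hF, dif_pos i.isLt, Fin.eta] at h
  exact h

lemma my_emb_count (n : ℕ) : ∀ (l : ℕ) (B : Fin l → Finset (Fin n)),
    (∏ i : Fin l, (n - (i : ℕ) - (B i).card)) ≤
      (Finset.univ.filter (fun f : Fin l ↪ Fin n => ∀ i, f i ∉ B i)).card := by
  intro l
  induction l with
  | zero =>
    intro B
    have h1 : (∏ i : Fin 0, (n - (i : ℕ) - (B i).card)) = 1 := by simp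
    rw [h1]
    refine Finset.card_pos.mpr ⟨⟨fun i => i.elim0, fun i => i.elim0⟩, ?_⟩
    exact Finset.mem_filter.mpr ⟨Finset.mem_univ _, fun i => i.elim0⟩
  | succ l ih =>
    intro B
    classical
    set T := Finset.univ.filter (fun f : Fin (l + 1) ↪ Fin n => ∀ i, f i ∉ B i) with hT
    set T' := Finset.univ.filter (fun f : Fin l ↪ Fin n => ∀ i, f i ∉ B i.castSucc) with hT'
    set r : (Fin (l + 1) ↪ Fin n) → (Fin l ↪ Fin n) :=
      fun f => Fin.castSuccEmb.trans f with hr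
    have hrapp : ∀ (f : Fin (l + 1) ↪ Fin n) (i : Fin l), r f i = f i.castSucc := by
      intro f i; rfl
    have hmaps : ∀ f ∈ T, r f ∈ T' := by
      intro f hf
      rw [hT, Finset.mem_filter] at hf
      exact Finset.mem_filter.mpr ⟨Finset.mem_univ _, fun i => by rw [hrapp]; exact hf.2 _⟩
    have hcard := Finset.card_eq_sum_card_fiberwise hmaps
    have hfiber : ∀ g ∈ T',
        (n - l - (B (Fin.last l)).card) ≤ (T.filter (fun f => r f = g)).card := by
      intro g hg
      rw [hT', Finset.mem_filter] at hg
      set C := Finset.univ \ ((B (Fin.last l)) ∪ Finset.image g Finset.univ) with hC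
      have hCcard : n - l - (B (Fin.last l)).card ≤ C.card := by
        have h1 : C.card = n - ((B (Fin.last l)) ∪ Finset.image g Finset.univ).card := by
          rw [hC, Finset.card_sdiff_of_subset (Finset.subset_univ _), Finset.card_univ, Fintype.card_fin]
        have h2 : ((B (Fin.last l)) ∪ Finset.image g Finset.univ).card
            ≤ (B (Fin.last l)).card + l := by
          refine le_trans (Finset.card_union_le _ _) ?_
          have h3 : (Finset.image g Finset.univ).card ≤ l := by
            refine le_trans Finset.card_image_le ?_
            simp
          omega
        omega
      refine le_trans hCcard
        (Finset.card_le_card_of_surjOn (fun f => f (Fin.last l)) ?_)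
      intro x hx
      rw [Finset.coe_sdiff, Set.mem_diff] at hx
      have hx1 : x ∉ B (Fin.last l) ∧ ∀ i, g i ≠ x := by
        have := hx.2
        simp only [Finset.coe_union, Set.mem_union, Finset.mem_coe, Finset.coe_image,
          Set.mem_image, Finset.mem_coe, Finset.coe_univ, Set.image_univ, Set.mem_range,
          not_or, not_exists] at this
        exact ⟨this.1, this.2⟩
      set femb : Fin (l + 1) ↪ Fin n :=
        ⟨Fin.snoc g x, my_snoc_injective g.injective hx1.2⟩ with hfemb
      refine ⟨femb, ?_, ?_⟩
      · rw [Finset.mem_coe, Finset.mem_filter]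
        refine ⟨Finset.mem_filter.mpr ⟨Finset.mem_univ _, ?_⟩, ?_⟩
        · intro i
          induction i using Fin.lastCases with
          | last =>
            show (Fin.snoc g x : Fin (l+1) → Fin n) (Fin.last l) ∉ _
            rw [Fin.snoc_last]; exact hx1.1
          | cast j =>
            show (Fin.snoc g x : Fin (l+1) → Fin n) j.castSucc ∉ _
            rw [Fin.snoc_castSucc]; exact hg.2 j
        · apply DFunLike.ext
          intro i
          rw [hrapp]
          show (Fin.snoc g x : Fin (l+1) → Fin n) i.castSucc = g i
          rw [Fin.snoc_castSucc]
      · show (Fin.snoc g x : Fin (l+1) → Fin n) (Fin.last l) = x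
        rw [Fin.snoc_last]
    calc ∏ i : Fin (l + 1), (n - (i : ℕ) - (B i).card)
        = (∏ i : Fin l, (n - (i : ℕ) - (B i.castSucc).card))
            * (n - l - (B (Fin.last l)).card) := by
          rw [Fin.prod_univ_castSucc]
          simp [Fin.coe_castSucc, Fin.val_last]
      _ ≤ T'.card * (n - l - (B (Fin.last l)).card) :=
          Nat.mul_le_mul_right _ (ih _)
      _ = ∑ _g ∈ T', (n - l - (B (Fin.last l)).card) := by
          rw [Finset.sum_const, smul_eq_mul, mul_comm]
      _ ≤ ∑ g ∈ T', (T.filter (fun f => r f = g)).card := Finset.sum_le_sum hfiber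
      _ = T.card := hcard.symm

lemma my_sum_le_sorted {d : ℕ} (c : Fin d → ℕ) (hc : ∀ j j' : Fin d, j ≤ j' → c j' ≤ c j)
    (J : Finset (Fin d)) {k : ℕ} (hk : J.card ≤ k) (hkd : k ≤ d) :
    ∑ t ∈ J, c t ≤ ∑ j : Fin k, c (Fin.castLE hkd j) := by
  classical
  set m := J.card with hm
  set e := J.orderEmbOfFin hm.symm with he
  set F : ℕ → ℕ := fun a => if h : a < d then c ⟨a, h⟩ else 0 with hF
  have himg : Finset.image (fun i => e i) Finset.univ = J := by
    apply Finset.coe_injective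
    rw [Finset.coe_image, Finset.coe_univ, Set.image_univ]
    exact J.range_orderEmbOfFin hm.symm
  have h1 : ∑ t ∈ J, c t = ∑ i : Fin m, c (e i) := by
    rw [← himg, Finset.sum_image (fun x _ y _ h => e.injective h)]
  have h2 : ∀ i : Fin m, c (e i) ≤ F (i : ℕ) := by
    intro i
    have hid : (i : ℕ) < d := lt_of_lt_of_le (lt_of_lt_of_le i.isLt hk) hkd
    rw [hF]
    simp only [dif_pos hid]
    refine hc _ _ ?_
    have := my_strictMono_fin_le (e.strictMono) i
    exact this
  have h3 : ∑ i : Fin m, c (e i) ≤ ∑ a ∈ Finset.range m, F a := by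
    rw [← Fin.sum_univ_eq_sum_range]
    exact Finset.sum_le_sum (fun i _ => h2 i)
  have h4 : ∑ a ∈ Finset.range m, F a ≤ ∑ a ∈ Finset.range k, F a :=
    Finset.sum_le_sum_of_subset (Finset.range_subset_range.mpr hk)
  have h5 : ∑ a ∈ Finset.range k, F a = ∑ j : Fin k, c (Fin.castLE hkd j) := by
    rw [← Fin.sum_univ_eq_sum_range]
    refine Finset.sum_congr rfl (fun j _ => ?_)
    rw [hF]
    simp only [dif_pos (lt_of_lt_of_le j.isLt hkd)]
    rfl
  omega

lemma my_exists_perm_extend {n l : ℕ} {p g : Fin l → Fin n} (hp : Function.Injective p)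
    (hg : Function.Injective g) : ∃ σ : Equiv.Perm (Fin n), ∀ i, σ (p i) = g i := by
  classical
  set f : Fin n → Fin n := fun x => if h : ∃ i, p i = x then g h.choose else x with hf
  have hfp : ∀ i, f (p i) = g i := by
    intro i
    have h : ∃ i', p i' = p i := ⟨i, rfl⟩
    have hcs := h.choose_spec
    rw [hf]
    simp only [dif_pos h]
    exact congrArg g (hp hcs)
  have hfst : Finset.image f (Finset.image p Finset.univ) ⊆ Finset.univ := Finset.subset_univ _
  have hinj : Set.InjOn f (Finset.image p Finset.univ) := by
    intro x hx y hy hxy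
    rw [Finset.coe_image, Finset.coe_univ, Set.image_univ, Set.mem_range] at hx hy
    obtain ⟨i, rfl⟩ := hx
    obtain ⟨i', rfl⟩ := hy
    rw [hfp, hfp] at hxy
    rw [hg hxy]
  obtain ⟨e, he⟩ := Finset.exists_equiv_extend_of_card_eq
    (t := (Finset.univ : Finset (Fin n))) (by simp) hfst hinj
  refine ⟨e.trans (Equiv.subtypeUnivEquiv (by simp)), fun i => ?_⟩
  have h2 := he (p i) (Finset.mem_image_of_mem _ (Finset.mem_univ i))
  show ((e (p i) : { x // x ∈ (Finset.univ : Finset (Fin n)) }) : Fin n) = g i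
  rw [h2, hfp]

instance (n : ℕ) : MeasurableSingletonClass (Equiv.Perm (Fin n)) :=
  ⟨fun a => by show MeasurableSet[⊤] {a}; exact MeasurableSpace.measurableSet_top⟩

/-- **Minimality half of Lemma 3 of the paper.** Over all sets of `k = Σ i, k i` atoms
in which `k i` atoms involve the `i`-th person, the probability of the conjunction of
negated atoms is at least `∏ i, (n − i − M i)/(n − i)`, where `M i` is the total count
of the `k i` most frequent sensitive values in the bucket; i.e. that probability is
minimized by choosing, for each person, the `k i` most frequent sensitive values. -/
theorem uniformOn_perm_avoid_ge_min
    (n : ℕ) (V : Type*) [Fintype V] [DecidableEq V] (s : Fin n → V)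
    (d : ℕ) (v : Fin d → V) (hv : Function.Injective v)
    (hrange : Set.range v = Set.range s)
    (c : Fin d → ℕ)
    (hc : ∀ j, c j = (Finset.univ.filter (fun x : Fin n => s x = v j)).card)
    (hcmono : ∀ j j' : Fin d, j ≤ j' → c j' ≤ c j)
    (l : ℕ) (hl : l ≤ n) (p : Fin l → Fin n) (hp : Function.Injective p)
    (k : Fin l → ℕ) (hkmono : ∀ i i' : Fin l, i ≤ i' → k i' ≤ k i)
    (hk1 : ∀ i, 1 ≤ k i) (hkd : ∀ i, k i ≤ d)
    (u : (i : Fin l) → Fin (k i) → V) (hu : ∀ i, Function.Injective (u i))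
    (M : Fin l → ℕ)
    (hM : ∀ i, M i = ∑ j : Fin (k i), c (Fin.castLE (hkd i) j))
    (hbound : ∀ i : Fin l, (i : ℕ) + M i ≤ n) :
    ∏ i : Fin l, ((n - (i : ℕ) - M i : ℕ) : ENNReal) / ((n - (i : ℕ) : ℕ) : ENNReal) ≤
      uniformOn (Set.univ : Set (Equiv.Perm (Fin n)))
        {π : Equiv.Perm (Fin n) | ∀ (i : Fin l) (j : Fin (k i)), s (π (p i)) ≠ u i j} := by
  classical
  set B : Fin l → Finset (Fin n) :=
    fun i => Finset.univ.filter (fun x : Fin n => ∃ j : Fin (k i), s x = u i j) with hB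
  have hBmem : ∀ (i : Fin l) (x : Fin n), x ∈ B i ↔ ∃ j : Fin (k i), s x = u i j := by
    intro i x; rw [hB]; simp
  set S := Finset.univ.filter (fun π : Equiv.Perm (Fin n) => ∀ i, π (p i) ∉ B i) with hS
  have hE : {π : Equiv.Perm (Fin n) | ∀ (i : Fin l) (j : Fin (k i)), s (π (p i)) ≠ u i j}
      = ↑S := by
    ext π
    rw [Set.mem_setOf_eq, Finset.mem_coe, hS, Finset.mem_filter]
    constructor
    · intro h
      refine ⟨Finset.mem_univ _, fun i hmem => ?_⟩
      obtain ⟨j, hj⟩ := (hBmem i _).mp hmem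
      exact h i j hj
    · intro h i j hj
      exact h.2 i ((hBmem i _).mpr ⟨j, hj⟩)
  rw [hE, uniformOn_univ, Measure.count_apply_finset]
  -- fiber structure over embeddings
  set Φ : Equiv.Perm (Fin n) → (Fin l ↪ Fin n) :=
    fun π => (⟨p, hp⟩ : Fin l ↪ Fin n).trans π.toEmbedding with hΦ
  have hΦapp : ∀ (π : Equiv.Perm (Fin n)) (i : Fin l), Φ π i = π (p i) := fun π i => rfl
  set Fc := (Finset.univ.filter (fun π : Equiv.Perm (Fin n) => ∀ i, π (p i) = p i)).card with hFc
  have hfiber : ∀ g : Fin l ↪ Fin n,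
      (Finset.univ.filter (fun π : Equiv.Perm (Fin n) => ∀ i, π (p i) = g i)).card = Fc := by
    intro g
    obtain ⟨σ, hσ⟩ := my_exists_perm_extend hp g.injective
    have himg : Finset.univ.filter (fun π : Equiv.Perm (Fin n) => ∀ i, π (p i) = g i)
        = (Finset.univ.filter (fun τ : Equiv.Perm (Fin n) => ∀ i, τ (p i) = p i)).image
            (fun τ => σ * τ) := by
      ext π
      simp only [Finset.mem_image, Finset.mem_filter, Finset.mem_univ, true_and]
      constructor
      · intro h
        refine ⟨σ⁻¹ * π, fun i => ?_, by group⟩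
        rw [Equiv.Perm.mul_apply, h i, ← hσ i, Equiv.Perm.coe_inv, Equiv.symm_apply_apply]
      · rintro ⟨τ, hτ, rfl⟩ i
        rw [Equiv.Perm.mul_apply, hτ i, hσ i]
    rw [himg, Finset.card_image_of_injective _ (mul_right_injective σ)]
  have htotal : Fintype.card (Equiv.Perm (Fin n)) = n.descFactorial l * Fc := by
    have h1 := Finset.card_eq_sum_card_fiberwise
      (f := Φ) (s := Finset.univ) (t := Finset.univ) (fun x _ => Finset.mem_univ _)
    have h3 : ∀ g ∈ (Finset.univ : Finset (Fin l ↪ Fin n)),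
        (Finset.univ.filter (fun π => Φ π = g)).card = Fc := by
      intro g _
      have h2 : (Finset.univ.filter (fun π => Φ π = g))
          = (Finset.univ.filter (fun π : Equiv.Perm (Fin n) => ∀ i, π (p i) = g i)) := by
        apply Finset.filter_congr
        intro π _
        exact ⟨fun h i => by rw [← h]; rfl, fun h => DFunLike.ext _ _ (fun i => h i)⟩
      rw [h2, hfiber g]
    rw [← Finset.card_univ, h1, Finset.sum_congr rfl h3, Finset.sum_const, smul_eq_mul,
      Finset.card_univ, Fintype.card_embedding_eq, Fintype.card_fin, Fintype.card_fin]
  set T := Finset.univ.filter (fun g : Fin l ↪ Fin n => ∀ i, g i ∉ B i) with hTdef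
  have hSgood : S.card = T.card * Fc := by
    have hmaps : ∀ π ∈ S, Φ π ∈ T := by
      intro π hπ
      rw [hS, Finset.mem_filter] at hπ
      exact Finset.mem_filter.mpr ⟨Finset.mem_univ _, fun i => hπ.2 i⟩
    have h1 := Finset.card_eq_sum_card_fiberwise hmaps
    have h2 : ∀ g ∈ T, (S.filter (fun π => Φ π = g)).card = Fc := by
      intro g hg
      rw [hTdef, Finset.mem_filter] at hg
      have heq : S.filter (fun π => Φ π = g)
          = Finset.univ.filter (fun π : Equiv.Perm (Fin n) => ∀ i, π (p i) = g i) := by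
        ext π
        rw [hS]
        simp only [Finset.mem_filter, Finset.mem_univ, true_and]
        constructor
        · rintro ⟨-, h⟩ i
          rw [← h]; rfl
        · intro h
          refine ⟨fun i => ?_, DFunLike.ext _ _ (fun i => h i)⟩
          rw [h i]; exact hg.2 i
      rw [heq, hfiber g]
    rw [h1, Finset.sum_congr rfl h2, Finset.sum_const, smul_eq_mul]
  -- card of B i is at most M i
  have hBM : ∀ i, (B i).card ≤ M i := by
    intro i
    set W := Finset.image (u i) Finset.univ with hW
    have hmaps : ∀ x ∈ B i, s x ∈ W := by
      intro x hx
      obtain ⟨j, hj⟩ := (hBmem i x).mp hx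
      rw [hW]
      exact Finset.mem_image.mpr ⟨j, Finset.mem_univ _, hj.symm⟩
    have h1 : (B i).card = ∑ w ∈ W, ((B i).filter (fun x => s x = w)).card :=
      Finset.card_eq_sum_card_fiberwise hmaps
    have h2 : ∀ w ∈ W, (B i).filter (fun x => s x = w)
        = Finset.univ.filter (fun x => s x = w) := by
      intro w hw
      obtain ⟨j, -, rfl⟩ := Finset.mem_image.mp hw
      ext x
      simp only [Finset.mem_filter, Finset.mem_univ, true_and]
      constructor
      · exact fun h => h.2
      · intro h
        exact ⟨(hBmem i x).mpr ⟨j, h⟩, h⟩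
    have h3 : (B i).card = ∑ j : Fin (k i), (Finset.univ.filter (fun x => s x = u i j)).card := by
      rw [h1, Finset.sum_congr rfl (fun w hw => by rw [h2 w hw]), hW,
        Finset.sum_image (fun x _ y _ h => hu i h)]
    set P := Finset.univ.filter (fun j : Fin (k i) => ∃ t : Fin d, v t = u i j) with hP
    have hd1 : 0 < d := lt_of_lt_of_le (hk1 i) (hkd i)
    set tf : Fin (k i) → Fin d :=
      fun j => if h : ∃ t : Fin d, v t = u i j then h.choose else ⟨0, hd1⟩ with htf
    have htf1 : ∀ j ∈ P, v (tf j) = u i j := by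
      intro j hj
      rw [hP, Finset.mem_filter] at hj
      rw [htf]
      simp only [dif_pos hj.2]
      exact hj.2.choose_spec
    have hzero : ∀ j ∈ (Finset.univ : Finset (Fin (k i))), j ∉ P →
        (Finset.univ.filter (fun x => s x = u i j)).card = 0 := by
      intro j _ hj
      rw [Finset.card_eq_zero, Finset.filter_eq_empty_iff]
      intro x _ hsx
      refine hj (Finset.mem_filter.mpr ⟨Finset.mem_univ _, ?_⟩)
      have hr : u i j ∈ Set.range s := ⟨x, hsx⟩
      rw [← hrange] at hr
      exact hr
    have h4 : ∑ j : Fin (k i), (Finset.univ.filter (fun x => s x = u i j)).card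
        = ∑ j ∈ P, (Finset.univ.filter (fun x => s x = u i j)).card :=
      (Finset.sum_subset (Finset.subset_univ P) hzero).symm
    have h5 : ∑ j ∈ P, (Finset.univ.filter (fun x => s x = u i j)).card
        = ∑ j ∈ P, c (tf j) := by
      refine Finset.sum_congr rfl (fun j hj => ?_)
      rw [hc (tf j), htf1 j hj]
    have h6 : ∑ j ∈ P, c (tf j) = ∑ t ∈ P.image tf, c t := by
      refine (Finset.sum_image ?_).symm
      intro x hx y hy h
      have := (htf1 x hx).symm.trans (h ▸ htf1 y hy)
      exact hu i this
    have h7 : (P.image tf).card ≤ k i :=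
      le_trans Finset.card_image_le (le_trans (Finset.card_filter_le _ _) (by simp))
    calc (B i).card
        = ∑ t ∈ P.image tf, c t := by rw [h3, h4, h5, h6]
      _ ≤ ∑ j : Fin (k i), c (Fin.castLE (hkd i) j) :=
          my_sum_le_sorted c hcmono (P.image tf) h7 (hkd i)
      _ = M i := (hM i).symm
  have hTlower : (∏ i : Fin l, (n - (i : ℕ) - M i)) ≤ T.card := by
    refine le_trans ?_ (my_emb_count n l B)
    refine Finset.prod_le_prod' (fun i _ => ?_)
    exact Nat.sub_le_sub_left (hBM i) _
  have hFc0 : Fc ≠ 0 := by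
    rw [hFc]
    exact Finset.card_ne_zero_of_mem
      (Finset.mem_filter.mpr ⟨Finset.mem_univ (1 : Equiv.Perm (Fin n)), fun i => rfl⟩)
  have hdnpos : ∀ i : Fin l, 0 < n - (i : ℕ) := by
    intro i; have := i.isLt; omega
  have hDpos : 0 < ∏ i : Fin l, (n - (i : ℕ)) :=
    Finset.prod_pos (fun i _ => hdnpos i)
  have hprodeq : (∏ i : Fin l, ((n - (i : ℕ) - M i : ℕ) : ENNReal) / ((n - (i : ℕ) : ℕ) : ENNReal))
      = ((∏ i : Fin l, (n - (i : ℕ) - M i) : ℕ) : ENNReal)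
        / ((∏ i : Fin l, (n - (i : ℕ)) : ℕ) : ENNReal) := by
    rw [ENNReal.eq_div_iff (by exact_mod_cast hDpos.ne') (by exact ENNReal.natCast_ne_top _)]
    rw [Nat.cast_prod, Nat.cast_prod, ← Finset.prod_mul_distrib]
    refine Finset.prod_congr rfl (fun i _ => ?_)
    exact ENNReal.mul_div_cancel (by exact_mod_cast (hdnpos i).ne') (ENNReal.natCast_ne_top _)
  rw [hprodeq]
  have hDeq : (∏ i : Fin l, (n - (i : ℕ))) = n.descFactorial l := by
    rw [Nat.descFactorial_eq_prod_range, ← Fin.prod_univ_eq_prod_range]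
  rw [hDeq, htotal, hSgood]
  push_cast
  rw [ENNReal.mul_div_mul_right _ _ (by exact_mod_cast hFc0) (ENNReal.natCast_ne_top _)]
  exact ENNReal.div_le_div (by exact_mod_cast hTlower) le_rfl
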